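/- Let (L,·) be a loop with holomorph H(L). Then H(L) is a cross inverse property loop (CIPL) if and only if AUM(L) is an abelian group and for all x, y ∈ L and all α, β ∈ AUM(L): (x^λ(α⁻¹βα) · yα) · x = y, where x^λ(α⁻¹βα) denotes the image of x^λ under the automorphism α⁻¹βα. -/

import Mathlib

/-- A loop: a set with a binary operation `*` and identity `1` such that
the equations `a * x = b` and `y * a = b` have unique solutions. -/
class Loop (L : Type*) extends Mul L, One L where
  one_mul : ∀ x : L, 1 * x = x
  mul_one : ∀ x : L, x * 1 = x
  mulLeft_exu : ∀ a b : L, ∃! x : L, a * x = b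
  mulRight_exu : ∀ a b : L, ∃! y : L, y * a = b

namespace Loop

variable {L : Type*} [Loop L]

/-- The right inverse `x^ρ` of `x`, the unique solution of `x * x^ρ = 1`. -/
noncomputable def rinv (x : L) : L := (mulLeft_exu x 1).exists.choose

/-- The left inverse `x^λ` of `x`, the unique solution of `x^λ * x = 1`. -/
noncomputable def linv (x : L) : L := (mulRight_exu x 1).exists.choose

theorem mul_rinv (x : L) : x * rinv x = 1 := (mulLeft_exu x 1).exists.choose_spec

theorem linv_mul (x : L) : linv x * x = 1 := (mulRight_exu x 1).exists.choose_spec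

/-- Any automorphism of a loop fixes the identity element. -/
theorem aut_map_one (α : L ≃* L) : α 1 = 1 :=
  (mulRight_exu (α 1) (α 1)).unique
    (by rw [← map_mul, Loop.one_mul]) (Loop.one_mul _)

end Loop

/-- An automorphic inverse property loop (AIPL): `(x·y)^ρ = x^ρ · y^ρ`. -/
def IsAIPL (L : Type*) [Loop L] : Prop :=
  ∀ x y : L, Loop.rinv (x * y) = Loop.rinv x * Loop.rinv y

/-- A cross inverse property loop (CIPL): `(x·y) · x^ρ = y`. -/
def IsCIPL (L : Type*) [Loop L] : Prop :=
  ∀ x y : L, (x * y) * Loop.rinv x = y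

/-- An autotopism of a loop: a triple of bijections `(A, B, C)` with
`xA · yB = (x·y)C` for all `x, y`. -/
def IsAutotopism {L : Type*} [Loop L] (A B C : L → L) : Prop :=
  Function.Bijective A ∧ Function.Bijective B ∧ Function.Bijective C ∧
    ∀ x y : L, A x * B y = C (x * y)

/-- The holomorph `H(L) = AUM(L) × L` of a loop `L`, with operation
`(α,x)∘(β,y) = (αβ, xβ·y)` (automorphisms act on the right, so
`αβ` is "first `α`, then `β`", i.e. `α.trans β`, and `xβ = β x`). -/
def Holomorph (L : Type*) [Loop L] : Type _ := (L ≃* L) × L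

namespace Holomorph

variable {L : Type*} [Loop L]

instance : Mul (Holomorph L) := ⟨fun a b => (a.1.trans b.1, b.1 a.2 * b.2)⟩

instance : One (Holomorph L) := ⟨(MulEquiv.refl L, 1)⟩

theorem mul_def (a b : Holomorph L) : a * b = (a.1.trans b.1, b.1 a.2 * b.2) := rfl

theorem one_def : (1 : Holomorph L) = (MulEquiv.refl L, (1 : L)) := rfl

noncomputable instance : Loop (Holomorph L) where
  one_mul a := by
    show ((MulEquiv.refl L).trans a.1, a.1 1 * a.2) = a
    have h1 : (MulEquiv.refl L).trans a.1 = a.1 := by ext t; rfl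
    have h2 : a.1 (1 : L) * a.2 = a.2 := by rw [Loop.aut_map_one, Loop.one_mul]
    exact Prod.ext h1 h2
  mul_one a := by
    show (a.1.trans (MulEquiv.refl L), (MulEquiv.refl L) a.2 * 1) = a
    have h1 : a.1.trans (MulEquiv.refl L) = a.1 := by ext t; rfl
    have h2 : (MulEquiv.refl L) a.2 * (1 : L) = a.2 := Loop.mul_one _
    exact Prod.ext h1 h2
  mulLeft_exu a b := by
    obtain ⟨y, hy, hyu⟩ := Loop.mulLeft_exu ((a.1.symm.trans b.1) a.2) b.2
    refine ⟨(a.1.symm.trans b.1, y), ?_, ?_⟩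
    · show (a.1.trans (a.1.symm.trans b.1), (a.1.symm.trans b.1) a.2 * y) = b
      have h1 : a.1.trans (a.1.symm.trans b.1) = b.1 := by
        ext t; simp [MulEquiv.trans_apply]
      exact Prod.ext h1 hy
    · intro c hc
      have h1 : a.1.trans c.1 = b.1 := congrArg Prod.fst hc
      have h2 : c.1 a.2 * c.2 = b.2 := congrArg Prod.snd hc
      have hc1 : c.1 = a.1.symm.trans b.1 := by
        ext t
        have h := congrArg (fun e : L ≃* L => e (a.1.symm t)) h1
        simpa [MulEquiv.trans_apply] using h
      have hc2 : c.2 = y := hyu c.2 (by rw [← hc1]; exact h2)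
      exact Prod.ext hc1 hc2
  mulRight_exu a b := by
    obtain ⟨w, hw, hwu⟩ := Loop.mulRight_exu a.2 b.2
    refine ⟨(b.1.trans a.1.symm, a.1.symm w), ?_, ?_⟩
    · show ((b.1.trans a.1.symm).trans a.1, a.1 (a.1.symm w) * a.2) = b
      have h1 : (b.1.trans a.1.symm).trans a.1 = b.1 := by
        ext t; simp [MulEquiv.trans_apply]
      have h2 : a.1 (a.1.symm w) * a.2 = b.2 := by
        rw [MulEquiv.apply_symm_apply]; exact hw
      exact Prod.ext h1 h2
    · intro c hc
      have h1 : c.1.trans a.1 = b.1 := congrArg Prod.fst hc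
      have h2 : a.1 c.2 * a.2 = b.2 := congrArg Prod.snd hc
      have hc1 : c.1 = b.1.trans a.1.symm := by
        ext t
        have h := congrArg (fun e : L ≃* L => a.1.symm (e t)) h1
        simpa [MulEquiv.trans_apply] using h
      have hc2 : c.2 = a.1.symm w := by
        have h := hwu (a.1 c.2) h2
        have h' := congrArg a.1.symm h
        simpa using h'
      exact Prod.ext hc1 hc2

end Holomorph


namespace Loop

theorem rinv_unique {L : Type*} [Loop L] {x r : L} (h : x * r = 1) : r = rinv x :=
  (mulLeft_exu x 1).unique h (mul_rinv x)

theorem linv_unique {L : Type*} [Loop L] {x l : L} (h : l * x = 1) : l = linv x :=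
  (mulRight_exu x 1).unique h (linv_mul x)

theorem rinv_linv {L : Type*} [Loop L] (x : L) : rinv (linv x) = x :=
  (rinv_unique (linv_mul x)).symm

theorem linv_rinv {L : Type*} [Loop L] (x : L) : linv (rinv x) = x :=
  (linv_unique (mul_rinv x)).symm

end Loop

theorem Holomorph.rinv_eq {L : Type*} [Loop L] (a : Holomorph L) :
    Loop.rinv a = (a.1.symm, Loop.rinv (a.1.symm a.2)) := by
  refine (Loop.rinv_unique ?_).symm
  show (a.1.trans a.1.symm, a.1.symm a.2 * Loop.rinv (a.1.symm a.2)) = (1 : Holomorph L)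
  rw [Holomorph.one_def]
  exact Prod.ext (MulEquiv.self_trans_symm a.1) (Loop.mul_rinv _)

/-- `H(L)` is a CIPL iff `AUM(L)` is abelian and
`(x^λ(α⁻¹βα) · yα) · x = y` for all `x, y ∈ L`, `α, β ∈ AUM(L)`
(maps compose left to right, so `x^λ(α⁻¹βα) = α (β (α⁻¹ (x^λ)))`). -/
theorem statement_10 {L : Type*} [Loop L] :
    IsCIPL (Holomorph L) ↔
      (∀ α β : L ≃* L, α.trans β = β.trans α) ∧
      ∀ (x y : L) (α β : L ≃* L), (α (β (α.symm (Loop.linv x))) * α y) * x = y := by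
  constructor
  · intro h
    have hA : ∀ (α β : L ≃* L) (x y : L),
        α.symm (β x * y) * Loop.rinv (α.symm x) = y := by
      intro α β x y
      have h1 := h (α, x) (β, y)
      rw [Holomorph.rinv_eq (α, x)] at h1
      have h2 := congrArg Prod.snd h1
      exact h2
    have hid : ∀ (α : L ≃* L) (y : L), α y = y := by
      intro α y
      have h1 := hA α (MulEquiv.refl L) (α 1) (α y)
      have h2 := hA (MulEquiv.refl L) (MulEquiv.refl L) 1 y
      rw [MulEquiv.refl_apply, ← map_mul, MulEquiv.symm_apply_apply,
        MulEquiv.symm_apply_apply] at h1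
      simp only [MulEquiv.refl_symm, MulEquiv.refl_apply] at h2
      exact h1.symm.trans h2
    have hcip : IsCIPL L := by
      intro x y
      have h1 := hA (MulEquiv.refl L) (MulEquiv.refl L) x y
      simpa using h1
    refine ⟨?_, ?_⟩
    · intro α β
      ext t
      simp only [MulEquiv.trans_apply, hid]
    · intro x y α β
      simp only [hid]
      have h1 := hcip (Loop.linv x) y
      rwa [Loop.rinv_linv] at h1
  · rintro ⟨hab, hB⟩
    have hD : ∀ x y : L, (Loop.linv x * y) * x = y := by
      intro x y
      have h1 := hB x y (MulEquiv.refl L) (MulEquiv.refl L)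
      simpa using h1
    have hid : ∀ (α : L ≃* L) (y : L), α y = y := by
      intro α y
      have h1 := hB 1 y α (MulEquiv.refl L)
      rw [MulEquiv.refl_apply, MulEquiv.apply_symm_apply] at h1
      have h2 := hD 1 (α y)
      exact h2.symm.trans h1
    have hcip : IsCIPL L := by
      intro x y
      have h1 := hD (Loop.rinv x) y
      rwa [Loop.linv_rinv] at h1
    intro a b
    rw [Holomorph.rinv_eq, Holomorph.mul_def]
    erw [Holomorph.mul_def]
    refine Prod.ext ?_ ?_
    · ext t
      simp only [MulEquiv.trans_apply, hid]
    · show a.1.symm (b.1 a.2 * b.2) * Loop.rinv (a.1.symm a.2) = b.2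
      simp only [hid]
      exact hcip a.2 b.2
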